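/- arXiv:1811.05695 — 2 statements merged into one kernel-verified Lean document; each statement's English description precedes it below -/
import Mathlib

section
/- Let W* ∈ ℝ^{T×P} satisfy W*_i ≠ W*_j for every edge (i,j) ∈ E, and set l*_{ij} = 1/(2‖W*_i − W*_j‖₂) for every (i,j) ∈ E. Then W* is a global minimizer of F over ℝ^{T×P} if and only if (W*, L*) is a global minimizer of J over all pairs (W, L) with W ∈ ℝ^{T×P} and L a family of positive edge weights. -/
open Finset

/-- The squared-loss part `S(W) = (1/2) ∑ₜ ‖Xₜᵀ Wₜ − yₜ‖₂²` of the CCMTL objective. -/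
noncomputable def lossS {T P : ℕ} (N : Fin T → ℕ)
    (X : ∀ t : Fin T, Matrix (Fin P) (Fin (N t)) ℝ)
    (y : ∀ t : Fin T, Fin (N t) → ℝ)
    (W : Fin T → EuclideanSpace ℝ (Fin P)) : ℝ :=
  (1 / 2) * ∑ t, ∑ n, ((∑ p, X t p n * W t p) - y t n) ^ 2

/-- The CCMTL objective `F(W) = S(W) + (λ/2) ∑_{(i,j)∈E} ‖W_i − W_j‖₂`. -/
noncomputable def objF {T P : ℕ} (N : Fin T → ℕ)
    (X : ∀ t : Fin T, Matrix (Fin P) (Fin (N t)) ℝ)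
    (y : ∀ t : Fin T, Fin (N t) → ℝ)
    (lam : ℝ) (E : Finset (Fin T × Fin T))
    (W : Fin T → EuclideanSpace ℝ (Fin P)) : ℝ :=
  lossS N X y W + (lam / 2) * ∑ e ∈ E, ‖W e.1 - W e.2‖

lemma amgm_edge' {l n : ℝ} (hl : 0 < l) (hn : 0 ≤ n) :
    n ≤ l * n ^ 2 + 1 / (4 * l) := by
  have h4 : 0 < 4 * l := by linarith
  rw [← sub_nonneg]
  have : l * n ^ 2 + 1 / (4 * l) - n = (2 * l * n - 1) ^ 2 / (4 * l) := by
    field_simp; ring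
  rw [this]; positivity

lemma edge_eq {n : ℝ} (hn : 0 < n) :
    (1 / (2 * n)) * n ^ 2 + 1 / (4 * (1 / (2 * n))) = n := by
  field_simp; ring

lemma edge_le {n ε : ℝ} (hn : 0 ≤ n) (hε : 0 < ε) :
    (1 / (2 * (n + ε))) * n ^ 2 + 1 / (4 * (1 / (2 * (n + ε)))) ≤ n + ε / 2 := by
  have hne : 0 < n + ε := by linarith
  have h1 : (1 / (2 * (n + ε))) * n ^ 2 ≤ n / 2 := by
    rw [div_mul_eq_mul_div, one_mul, div_le_div_iff₀ (by linarith) (by norm_num)]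
    nlinarith
  have h2 : 1 / (4 * (1 / (2 * (n + ε)))) = (n + ε) / 2 := by
    field_simp; ring
  linarith

/-- The surrogate objective
`J(W, L) = S(W) + (λ/2) ∑_{(i,j)∈E} (l_{ij} ‖W_i − W_j‖₂² + 1/(4 l_{ij}))`. -/
noncomputable def objJ {T P : ℕ} (N : Fin T → ℕ)
    (X : ∀ t : Fin T, Matrix (Fin P) (Fin (N t)) ℝ)
    (y : ∀ t : Fin T, Fin (N t) → ℝ)
    (lam : ℝ) (E : Finset (Fin T × Fin T))
    (W : Fin T → EuclideanSpace ℝ (Fin P))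
    (L : Fin T × Fin T → ℝ) : ℝ :=
  lossS N X y W + (lam / 2) * ∑ e ∈ E, (L e * ‖W e.1 - W e.2‖ ^ 2 + 1 / (4 * L e))

/-- Theorem 1 of the paper: if `W*_i ≠ W*_j` for all edges and
`l*_{ij} = 1/(2‖W*_i − W*_j‖₂)`, then `W*` globally minimizes `F` iff
`(W*, L*)` globally minimizes `J` over all `W` and positive edge weights `L`. -/
theorem optimal_solutions_coincide {T P : ℕ} (hT : 1 ≤ T) (hP : 1 ≤ P)
    (N : Fin T → ℕ) (X : ∀ t : Fin T, Matrix (Fin P) (Fin (N t)) ℝ)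
    (y : ∀ t : Fin T, Fin (N t) → ℝ)
    (lam : ℝ) (hlam : 0 ≤ lam) (E : Finset (Fin T × Fin T))
    (Wstar : Fin T → EuclideanSpace ℝ (Fin P))
    (hW : ∀ e ∈ E, Wstar e.1 ≠ Wstar e.2) :
    (∀ W : Fin T → EuclideanSpace ℝ (Fin P),
        objF N X y lam E Wstar ≤ objF N X y lam E W) ↔
      (∀ (W : Fin T → EuclideanSpace ℝ (Fin P)) (L : Fin T × Fin T → ℝ),
        (∀ e ∈ E, 0 < L e) →
          objJ N X y lam E Wstar (fun e => 1 / (2 * ‖Wstar e.1 - Wstar e.2‖)) ≤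
            objJ N X y lam E W L) := by

  have hJF : objJ N X y lam E Wstar (fun e => 1 / (2 * ‖Wstar e.1 - Wstar e.2‖)) =
      objF N X y lam E Wstar := by
    unfold objJ objF
    congr 1
    congr 1
    apply Finset.sum_congr rfl
    intro e he
    have hn : (0:ℝ) < ‖Wstar e.1 - Wstar e.2‖ := by
      rw [norm_pos_iff]
      exact sub_ne_zero_of_ne (hW e he)
    exact edge_eq hn
  constructor
  · intro hF W L hL
    rw [hJF]
    calc objF N X y lam E Wstar ≤ objF N X y lam E W := hF W
      _ ≤ objJ N X y lam E W L := by
          unfold objF objJ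
          have hsum : (∑ e ∈ E, ‖W e.1 - W e.2‖) ≤
              ∑ e ∈ E, (L e * ‖W e.1 - W e.2‖ ^ 2 + 1 / (4 * L e)) := by
            apply Finset.sum_le_sum
            intro e he
            exact amgm_edge' (hL e he) (norm_nonneg _)
          have hl2 : (0:ℝ) ≤ lam / 2 := by linarith
          nlinarith [mul_le_mul_of_nonneg_left hsum hl2]
  · intro hJ W
    rw [← hJF]
    have key : ∀ ε : ℝ, 0 < ε →
        objJ N X y lam E Wstar (fun e => 1 / (2 * ‖Wstar e.1 - Wstar e.2‖)) ≤
          objF N X y lam E W + (lam / 2) * (E.card * (ε / 2)) := by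
      intro ε hε
      have := hJ W (fun e => 1 / (2 * (‖W e.1 - W e.2‖ + ε)))
        (fun e he => by positivity)
      refine this.trans ?_
      unfold objJ objF
      rw [add_assoc, ← mul_add]
      gcongr lossS N X y W + (lam / 2) * ?_ <;> try linarith
      calc (∑ e ∈ E, ((1 / (2 * (‖W e.1 - W e.2‖ + ε))) * ‖W e.1 - W e.2‖ ^ 2
              + 1 / (4 * (1 / (2 * (‖W e.1 - W e.2‖ + ε))))))
          ≤ ∑ e ∈ E, (‖W e.1 - W e.2‖ + ε / 2) := by
            apply Finset.sum_le_sum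
            intro e he
            exact edge_le (norm_nonneg _) hε
        _ = (∑ e ∈ E, ‖W e.1 - W e.2‖) + E.card * (ε / 2) := by
            rw [Finset.sum_add_distrib, Finset.sum_const, nsmul_eq_mul]
    by_contra hcon
    push_neg at hcon
    set a := objJ N X y lam E Wstar (fun e => 1 / (2 * ‖Wstar e.1 - Wstar e.2‖))
    set b := objF N X y lam E W
    have hc : (0:ℝ) < (lam / 2) * E.card / 2 + 1 := by positivity
    have hε : (0:ℝ) < (a - b) / ((lam / 2) * E.card / 2 + 1) := by
      apply div_pos (by linarith) hc
    have := key _ hε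
    set c : ℝ := (lam / 2) * E.card / 2 with hcdef
    have hc0 : 0 ≤ c := by positivity
    have heq : (lam / 2) * (E.card * (((a - b) / (c + 1)) / 2)) = c * (a - b) / (c + 1) := by
      rw [hcdef]; ring
    rw [heq] at this
    have hlt : c * (a - b) / (c + 1) < a - b := by
      rw [div_lt_iff₀ (by linarith)]
      nlinarith
    linarith
end

section
/- Let W⁻ ∈ ℝ^{T×P} satisfy W⁻_i ≠ W⁻_j for every edge (i,j) ∈ E, define the edge weights l_{ij} = 1/(2‖W⁻_i − W⁻_j‖₂), and let W⁺ ∈ ℝ^{T×P} be any global minimizer of the function W ↦ J(W, L) with these fixed edge weights. Then F(W⁺) ≤ F(W⁻). -/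
open Finset

/-- Majorize–minimize descent: if `W⁻_i ≠ W⁻_j` on every edge,
`l_{ij} = 1/(2‖W⁻_i − W⁻_j‖₂)`, and `W⁺` globally minimizes `W ↦ J(W, L)`,
then `F(W⁺) ≤ F(W⁻)`. -/
theorem mm_descent {T P : ℕ} (hT : 1 ≤ T) (hP : 1 ≤ P)
    (N : Fin T → ℕ) (X : ∀ t : Fin T, Matrix (Fin P) (Fin (N t)) ℝ)
    (y : ∀ t : Fin T, Fin (N t) → ℝ)
    (lam : ℝ) (hlam : 0 ≤ lam) (E : Finset (Fin T × Fin T))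
    (Wm : Fin T → EuclideanSpace ℝ (Fin P))
    (hWm : ∀ e ∈ E, Wm e.1 ≠ Wm e.2)
    (Wp : Fin T → EuclideanSpace ℝ (Fin P))
    (hWp : ∀ W : Fin T → EuclideanSpace ℝ (Fin P),
      objJ N X y lam E Wp (fun e => 1 / (2 * ‖Wm e.1 - Wm e.2‖)) ≤
        objJ N X y lam E W (fun e => 1 / (2 * ‖Wm e.1 - Wm e.2‖))) :
    objF N X y lam E Wp ≤ objF N X y lam E Wm := by
  set L : Fin T × Fin T → ℝ := fun e => 1 / (2 * ‖Wm e.1 - Wm e.2‖) with hL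
  have h1 : objF N X y lam E Wp ≤ objJ N X y lam E Wp L := by
    unfold objF objJ
    gcongr with e he
    have ha : (0:ℝ) < ‖Wm e.1 - Wm e.2‖ := by
      rw [norm_pos_iff]; exact sub_ne_zero.mpr (hWm e he)
    have hx : (0:ℝ) ≤ ‖Wp e.1 - Wp e.2‖ := norm_nonneg _
    simp only [hL]
    rw [div_mul_eq_mul_div, one_mul, one_div, one_div,
      mul_inv, inv_inv]
    have key : (‖Wp e.1 - Wp e.2‖ - ‖Wm e.1 - Wm e.2‖)^2 ≥ 0 := sq_nonneg _
    set x := ‖Wp e.1 - Wp e.2‖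
    set a := ‖Wm e.1 - Wm e.2‖
    rw [← sub_nonneg]
    have : x ^ 2 / (2 * a) + 4⁻¹ * (2 * a) - x = (x - a)^2 / (2*a) := by
      field_simp; ring
    rw [this]; positivity
  have h3 : objJ N X y lam E Wm L = objF N X y lam E Wm := by
    unfold objF objJ
    congr 1
    congr 1
    apply Finset.sum_congr rfl
    intro e he
    have ha : (0:ℝ) < ‖Wm e.1 - Wm e.2‖ := by
      rw [norm_pos_iff]; exact sub_ne_zero.mpr (hWm e he)
    simp only [hL]
    set a := ‖Wm e.1 - Wm e.2‖
    field_simp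
    ring
  calc objF N X y lam E Wp ≤ objJ N X y lam E Wp L := h1
    _ ≤ objJ N X y lam E Wm L := hWp Wm
    _ = objF N X y lam E Wm := h3
end
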